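/- arXiv:2110.12413 — 3 statements merged into one kernel-verified Lean document; each statement's English description precedes it below -/
import Mathlib

section
/- Let k ≥ 4 and 0 < |t| < 1 be real. Define the real symmetric tridiagonal k×k matrix M with diagonal entries m_j = (2k-2j+1)(2j) + t²(2j-1)(2k-2j+2) for 1 ≤ j ≤ k and off-diagonal entries s_j = t·√((2j+1)(2j)(2k-2j+1)(2k-2j)) for 1 ≤ j ≤ k-1. Then every eigenvalue of M is at least 1. -/
/-!
By Gershgorin's theorem every eigenvalue is at least `M j j - |s (j-1)| - |s j|` for some row `j`.
AM–GM bounds each off-diagonal entry `t √(U V)` by `(U + t² V) / 2`, and for this matrix the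
diagonal entry minus the two bounds of its row collapses to `t² + (1 - t²)(2k - 2j + 2) ≥ 1`.
-/

open Finset Module.End

theorem abs_mul_sqrt_mul_le (t : ℝ) {U V : ℝ} (hU : 0 ≤ U) (hV : 0 ≤ V) :
    |t| * √(U * V) ≤ (U + t ^ 2 * V) / 2 := by
  rw [← Real.sqrt_sq_eq_abs, ← Real.sqrt_mul (sq_nonneg t), Real.sqrt_le_left (by positivity)]
  nlinarith [sq_nonneg (U - t ^ 2 * V)]

theorem sum_ite_le_of_subsingleton {ι M : Type*} [Fintype ι] [AddCommMonoid M] [PartialOrder M]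
    [IsOrderedAddMonoid M] {p : ι → Prop} [DecidablePred p] (hp : ∀ a b, p a → p b → a = b)
    {r : M} (hr : 0 ≤ r) : ∑ j, (if p j then r else 0) ≤ r := by
  rw [sum_ite, sum_const_zero, add_zero, sum_const]
  have hcard : #{j | p j} ≤ 1 :=
    card_le_one.mpr fun a ha b hb => hp a b (mem_filter.mp ha).2 (mem_filter.mp hb).2
  simpa using nsmul_le_nsmul_left hr hcard

theorem le_of_hasEigenvalue_of_add_sum_norm_le {n : Type*} [Fintype n] [DecidableEq n]
    {A : Matrix n n ℝ} {c μ : ℝ} (hμ : HasEigenvalue (Matrix.toLin' A) μ)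
    (hrow : ∀ i, c + ∑ j ∈ univ.erase i, ‖A i j‖ ≤ A i i) : c ≤ μ := by
  obtain ⟨i, hi⟩ := eigenvalue_mem_ball hμ
  rw [Metric.mem_closedBall, Real.dist_eq, abs_le] at hi
  linarith [hrow i, hi.1]

def symmTridiag {α : Type*} [Zero α] (k : ℕ) (d s : ℕ → α) : Matrix (Fin k) (Fin k) α :=
  Matrix.of fun i j =>
    if (i : ℕ) = j then d i
    else if (j : ℕ) = i + 1 then s i
    else if (i : ℕ) = j + 1 then s j
    else 0

section symmTridiag

variable {k : ℕ} {d s b : ℕ → ℝ}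

theorem symmTridiag_apply_self {α : Type*} [Zero α] (d s : ℕ → α) (i : Fin k) :
    symmTridiag k d s i i = d i := by
  simp [symmTridiag]

/-- `b m` bounds the off-diagonal entry `s (m - 1)` joining rows `m - 1` and `m`. -/
theorem sum_erase_norm_symmTridiag_le (hb : ∀ m ≤ k, 0 ≤ b m)
    (hs : ∀ n, n + 1 < k → |s n| ≤ b (n + 1)) (i : Fin k) :
    ∑ j ∈ univ.erase i, ‖symmTridiag k d s i j‖ ≤ b i + b (i + 1) := by
  have hbi : 0 ≤ b i := hb i i.isLt.le
  have hbi' : 0 ≤ b (i + 1) := hb (i + 1) i.isLt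
  have hentry : ∀ j ∈ univ.erase i, ‖symmTridiag k d s i j‖ ≤
      (if (i : ℕ) = j + 1 then b i else 0) + (if (j : ℕ) = i + 1 then b (i + 1) else 0) := by
    intro j hj
    have hij : (i : ℕ) ≠ j := fun h => (mem_erase.mp hj).1 (Fin.ext h.symm)
    simp only [symmTridiag, Matrix.of_apply, if_neg hij, Real.norm_eq_abs]
    split_ifs with hright hleft hleft
    · omega
    · simpa using hs i (by omega)
    · simpa [hleft] using hs j (by omega)
    · simp
  calc ∑ j ∈ univ.erase i, ‖symmTridiag k d s i j‖
      ≤ ∑ j : Fin k,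
          ((if (i : ℕ) = j + 1 then b i else 0) + (if (j : ℕ) = i + 1 then b (i + 1) else 0)) :=
        (sum_le_sum hentry).trans <| sum_le_sum_of_subset_of_nonneg (erase_subset _ _)
          fun j _ _ => by split_ifs <;> positivity
    _ ≤ b i + b (i + 1) := by
        rw [sum_add_distrib]
        exact add_le_add
          (sum_ite_le_of_subsingleton (fun a a' ha ha' => Fin.ext (by omega)) hbi)
          (sum_ite_le_of_subsingleton (fun a a' ha ha' => Fin.ext (ha.trans ha'.symm)) hbi')

theorem le_of_hasEigenvalue_symmTridiag {c μ : ℝ} (hb : ∀ m ≤ k, 0 ≤ b m)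
    (hs : ∀ n, n + 1 < k → |s n| ≤ b (n + 1)) (hrow : ∀ n < k, c + b n + b (n + 1) ≤ d n)
    (hμ : HasEigenvalue (Matrix.toLin' (symmTridiag k d s)) μ) : c ≤ μ :=
  le_of_hasEigenvalue_of_add_sum_norm_le hμ fun i => by
    rw [symmTridiag_apply_self]
    linarith [sum_erase_norm_symmTridiag_le (d := d) hb hs i, hrow i i.isLt]

end symmTridiag

noncomputable section wMatrix

variable (k : ℕ) (t : ℝ)

def wDiag (n : ℕ) : ℝ :=
  (2 * (k : ℝ) - 2 * (n + 1) + 1) * (2 * (n + 1)) +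
    t ^ 2 * (2 * (n + 1 : ℝ) - 1) * (2 * (k : ℝ) - 2 * (n + 1) + 2)

def wOffDiag (n : ℕ) : ℝ :=
  t * √((2 * (n + 1 : ℝ) + 1) * (2 * (n + 1)) *
    (2 * (k : ℝ) - 2 * (n + 1) + 1) * (2 * (k : ℝ) - 2 * (n + 1)))

/-- The AM–GM bound of `abs_mul_sqrt_mul_le` for `wOffDiag k t (m - 1)`. -/
def wOffDiagBound (m : ℕ) : ℝ :=
  (2 * m * (2 * k - 2 * m) + t ^ 2 * ((2 * m + 1) * (2 * k - 2 * m + 1))) / 2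

variable {k}

theorem abs_wOffDiag_le {n : ℕ} (hn : n + 1 < k) :
    |wOffDiag k t n| ≤ wOffDiagBound k t (n + 1) := by
  have hnk : (n : ℝ) + 2 ≤ k := by exact_mod_cast hn
  have hU : 0 ≤ 2 * ((n : ℝ) + 1) * (2 * k - 2 * (n + 1)) := by nlinarith
  have hV : 0 ≤ (2 * ((n : ℝ) + 1) + 1) * (2 * k - 2 * (n + 1) + 1) := by nlinarith
  have hsqrt := abs_mul_sqrt_mul_le t hU hV
  rw [wOffDiag, abs_mul, abs_of_nonneg (Real.sqrt_nonneg _)]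
  convert hsqrt using 3
  · ring
  · simp only [wOffDiagBound]; push_cast; ring

theorem wOffDiagBound_nonneg {m : ℕ} (hm : m ≤ k) : 0 ≤ wOffDiagBound k t m := by
  have hmk : (m : ℝ) ≤ k := by exact_mod_cast hm
  unfold wOffDiagBound
  have hU : 0 ≤ 2 * (m : ℝ) * (2 * k - 2 * m) := by nlinarith
  have hV : 0 ≤ (2 * (m : ℝ) + 1) * (2 * k - 2 * m + 1) := by nlinarith
  positivity

theorem one_add_wOffDiagBound_add_le_wDiag (ht : t ^ 2 ≤ 1) {n : ℕ} (hn : n < k) :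
    1 + wOffDiagBound k t n + wOffDiagBound k t (n + 1) ≤ wDiag k t n := by
  have hnk : (n : ℝ) + 1 ≤ k := by exact_mod_cast hn
  have hslack : wDiag k t n - (1 + wOffDiagBound k t n + wOffDiagBound k t (n + 1)) =
      (1 - t ^ 2) * (2 * k - 2 * n - 1) := by
    simp only [wDiag, wOffDiagBound]; push_cast; ring
  nlinarith

end wMatrix

theorem w_matrix_eigenvalues_ge_one_general (k : ℕ) (t : ℝ)
    (ht0 : 0 < t) (ht1 : t < 1)
    (M : Matrix (Fin k) (Fin k) ℝ)
    (hM : ∀ i i' : Fin k,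
      M i i' =
        if (i : ℕ) = (i' : ℕ) then
          (2 * (k : ℝ) - 2 * ((i : ℕ) + 1) + 1) * (2 * ((i : ℕ) + 1)) +
            t ^ 2 * (2 * ((i : ℕ) + 1 : ℝ) - 1) * (2 * (k : ℝ) - 2 * ((i : ℕ) + 1) + 2)
        else if (i' : ℕ) = (i : ℕ) + 1 then
          t * Real.sqrt ((2 * ((i : ℕ) + 1 : ℝ) + 1) * (2 * ((i : ℕ) + 1)) *
            (2 * (k : ℝ) - 2 * ((i : ℕ) + 1) + 1) * (2 * (k : ℝ) - 2 * ((i : ℕ) + 1)))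
        else if (i : ℕ) = (i' : ℕ) + 1 then
          t * Real.sqrt ((2 * ((i' : ℕ) + 1 : ℝ) + 1) * (2 * ((i' : ℕ) + 1)) *
            (2 * (k : ℝ) - 2 * ((i' : ℕ) + 1) + 1) * (2 * (k : ℝ) - 2 * ((i' : ℕ) + 1)))
        else 0)
    (μ : ℝ) (hμ : ∃ v : Fin k → ℝ, v ≠ 0 ∧ M.mulVec v = μ • v) :
    1 ≤ μ := by
  have hMeq : M = symmTridiag k (wDiag k t) (wOffDiag k t) := Matrix.ext hM
  subst hMeq
  obtain ⟨v, hv, hMv⟩ := hμ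
  have heig : HasEigenvalue (Matrix.toLin' (symmTridiag k (wDiag k t) (wOffDiag k t))) μ :=
    hasEigenvalue_of_hasEigenvector
      ⟨mem_eigenspace_iff.mpr (by rw [Matrix.toLin'_apply, hMv]), hv⟩
  have ht : t ^ 2 ≤ 1 := pow_le_one₀ ht0.le ht1.le
  exact le_of_hasEigenvalue_symmTridiag (fun _ => wOffDiagBound_nonneg t)
    (fun _ => abs_wOffDiag_le t) (fun _ => one_add_wOffDiagBound_add_le_wDiag t ht) heig

/-- Every eigenvalue of the real symmetric tridiagonal matrix `M` (arising from
the Kohn Laplacian on the `W` subspaces, with `k ≥ 4` and `0 < t < 1`) is at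
least `1`. Rows/columns are indexed by `i : Fin k`, corresponding to the
1-based index `j = i + 1`. -/
theorem w_matrix_eigenvalues_ge_one (k : ℕ) (hk : 4 ≤ k) (t : ℝ)
    (ht0 : 0 < t) (ht1 : t < 1)
    (M : Matrix (Fin k) (Fin k) ℝ)
    (hM : ∀ i i' : Fin k,
      M i i' =
        if (i : ℕ) = (i' : ℕ) then
          (2 * (k : ℝ) - 2 * ((i : ℕ) + 1) + 1) * (2 * ((i : ℕ) + 1)) +
            t ^ 2 * (2 * ((i : ℕ) + 1 : ℝ) - 1) * (2 * (k : ℝ) - 2 * ((i : ℕ) + 1) + 2)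
        else if (i' : ℕ) = (i : ℕ) + 1 then
          t * Real.sqrt ((2 * ((i : ℕ) + 1 : ℝ) + 1) * (2 * ((i : ℕ) + 1)) *
            (2 * (k : ℝ) - 2 * ((i : ℕ) + 1) + 1) * (2 * (k : ℝ) - 2 * ((i : ℕ) + 1)))
        else if (i : ℕ) = (i' : ℕ) + 1 then
          t * Real.sqrt ((2 * ((i' : ℕ) + 1 : ℝ) + 1) * (2 * ((i' : ℕ) + 1)) *
            (2 * (k : ℝ) - 2 * ((i' : ℕ) + 1) + 1) * (2 * (k : ℝ) - 2 * ((i' : ℕ) + 1)))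
        else 0)
    (μ : ℝ) (hμ : ∃ v : Fin k → ℝ, v ≠ 0 ∧ M.mulVec v = μ • v) :
    1 ≤ μ :=
  w_matrix_eigenvalues_ge_one_general k t ht0 ht1 M hM μ hμ
end

section
/- Let k ≥ 4 and 0 < t < 1. For 1 ≤ j ≤ k let m_j = (2k-2j+1)(2j) + t²(2j-1)(2k-2j+2) and s_j = t√((2j+1)(2j)(2k-2j+1)(2k-2j)), with s_0 = s_k = 0. Then for every 1 ≤ j ≤ k, m_j - s_{j-1} - s_j ≥ 1. -/
/-!
Bound each off-diagonal term by AM–GM, splitting its four factors as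
`t * √(p q r s) ≤ (t² q r + p s) / 2`. With this pairing the bounds cancel against the
diagonal term: `m_j` minus the two bounds is exactly `1 + t²`.
-/

lemma mul_sqrt_mul_le (t : ℝ) {X Y : ℝ} (hX : 0 ≤ X) (hY : 0 ≤ Y) :
    t * √(X * Y) ≤ (t ^ 2 * X + Y) / 2 := by
  have hsqrt : |t| * √(X * Y) = √(t ^ 2 * X) * √Y := by
    rw [← Real.sqrt_sq_eq_abs, ← Real.sqrt_mul (sq_nonneg t), ← Real.sqrt_mul (by positivity),
      mul_assoc]
  calc t * √(X * Y) ≤ |t| * √(X * Y) := by gcongr; exact le_abs_self t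
    _ = √(t ^ 2 * X) * √Y := hsqrt
    _ ≤ ((√(t ^ 2 * X)) ^ 2 + (√Y) ^ 2) / 2 := by nlinarith [two_mul_le_add_sq (√(t ^ 2 * X)) √Y]
    _ = (t ^ 2 * X + Y) / 2 := by rw [Real.sq_sqrt (by positivity), Real.sq_sqrt hY]

lemma mul_sqrt_mul_mul_mul_le (t : ℝ) {p q r s : ℝ} (hqr : 0 ≤ q * r) (hps : 0 ≤ p * s) :
    t * √(p * q * r * s) ≤ (t ^ 2 * (q * r) + p * s) / 2 := by
  have h := mul_sqrt_mul_le t hqr hps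
  rwa [show q * r * (p * s) = p * q * r * s by ring] at h

/-- The boundary values `s_0 = s_k = 0` need no special case: the formula for `s_{j-1}` has the
factor `2j - 2`, which vanishes at `j = 1`, and that for `s_j` has `2k - 2j`, vanishing at `j = k`. -/
theorem gershgorin_row_bounds_general (k : ℕ) (t : ℝ) :
    ∀ j : ℕ, 1 ≤ j → j ≤ k →
      ((2 * (k : ℝ) - 2 * j + 1) * (2 * j) +
          t ^ 2 * (2 * (j : ℝ) - 1) * (2 * (k : ℝ) - 2 * j + 2))
        - t * Real.sqrt ((2 * (j : ℝ) - 1) * (2 * (j : ℝ) - 2) *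
            (2 * (k : ℝ) - 2 * j + 3) * (2 * (k : ℝ) - 2 * j + 2))
        - t * Real.sqrt ((2 * (j : ℝ) + 1) * (2 * j) *
            (2 * (k : ℝ) - 2 * j + 1) * (2 * (k : ℝ) - 2 * j)) ≥ 1 := by
  intro j hj hjk
  have hj' : (1 : ℝ) ≤ j := by exact_mod_cast hj
  have hjk' : (j : ℝ) ≤ k := by exact_mod_cast hjk
  have hprev := mul_sqrt_mul_mul_mul_le t (p := 2 * (j : ℝ) - 1) (q := 2 * (j : ℝ) - 2)
    (r := 2 * (k : ℝ) - 2 * j + 3) (s := 2 * (k : ℝ) - 2 * j + 2)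
    (mul_nonneg (by linarith) (by linarith)) (mul_nonneg (by linarith) (by linarith))
  have hnext := mul_sqrt_mul_mul_mul_le t (p := 2 * (j : ℝ) + 1) (q := 2 * (j : ℝ))
    (r := 2 * (k : ℝ) - 2 * j + 1) (s := 2 * (k : ℝ) - 2 * j)
    (mul_nonneg (by linarith) (by linarith)) (mul_nonneg (by linarith) (by linarith))
  linear_combination hprev + hnext + sq_nonneg t

/-- For `k ≥ 4` and `0 < t < 1`, the Gershgorin lower bound `m_j - s_{j-1} - s_j`
is at least `1` for every `1 ≤ j ≤ k`. The formula for `s` automatically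
vanishes at `j = 0` and `j = k`. -/
theorem gershgorin_row_bounds (k : ℕ) (hk : 4 ≤ k) (t : ℝ)
    (ht0 : 0 < t) (ht1 : t < 1) :
    ∀ j : ℕ, 1 ≤ j → j ≤ k →
      ((2 * (k : ℝ) - 2 * j + 1) * (2 * j) +
          t ^ 2 * (2 * (j : ℝ) - 1) * (2 * (k : ℝ) - 2 * j + 2))
        - t * Real.sqrt ((2 * (j : ℝ) - 1) * (2 * (j : ℝ) - 2) *
            (2 * (k : ℝ) - 2 * j + 3) * (2 * (k : ℝ) - 2 * j + 2))
        - t * Real.sqrt ((2 * (j : ℝ) + 1) * (2 * j) *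
            (2 * (k : ℝ) - 2 * j + 1) * (2 * (k : ℝ) - 2 * j)) ≥ 1 :=
  gershgorin_row_bounds_general k t
end

section
/- Let d ≥ 1 be odd and k ≥ 0 be even. Then the number of integers a with 0 ≤ a ≤ k such that d divides 2a - k equals 2⌊k/(2d)⌋ + 1. -/
/-!
Write `k = 2m`. As `d` is odd it is coprime to `2`, so `d ∣ 2a - 2m` iff `a ≡ m [MOD d]`, and
we count the `a ∈ [0, 2m]` with `a ≡ m`. With `m = qd + s`, `0 ≤ s < d`, the interval splits into
`2q` full periods of length `d`, each with one hit, and a tail of length `2s + 1`. Either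
`2s + 1 < d` and the tail contains the residue `s`, or `2s + 1 ≥ d` and the tail is one more full
period followed by `2s + 1 - d ≤ s` numbers, which miss `s`. Either way there are `2q + 1` hits.
-/

theorem Nat.count_modEq_two_mul_add_one {d : ℕ} (hd : 0 < d) (m : ℕ) :
    (2 * m + 1).count (· ≡ m [MOD d]) = 2 * (m / d) + 1 := by
  rw [Nat.count_modEq_card _ hd]
  have hs : m % d < d := Nat.mod_lt m hd
  have hsplit : 2 * m + 1 = (2 * (m % d) + 1) + d * (2 * (m / d)) := by
    have := Nat.div_add_mod m d
    lia
  rw [hsplit, Nat.add_mul_div_left _ _ hd, Nat.add_mul_mod_self_left]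
  rcases lt_or_ge (2 * (m % d) + 1) d with hlt | hge
  · rw [Nat.div_eq_of_lt hlt, Nat.mod_eq_of_lt hlt, if_pos (by lia)]
    lia
  · have hlt : 2 * (m % d) + 1 - d < d := by lia
    rw [Nat.div_eq_of_lt_le (k := 1) (by lia) (by lia), Nat.mod_eq_sub_mod hge,
      Nat.mod_eq_of_lt hlt, if_neg (by lia)]
    lia

theorem Nat.intCast_dvd_two_mul_sub_iff_modEq {d : ℕ} (hd : Odd d) (a m : ℕ) :
    (d : ℤ) ∣ 2 * (a : ℤ) - 2 * (m : ℤ) ↔ a ≡ m [MOD d] := by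
  have hcop : IsCoprime (d : ℤ) 2 := Int.isCoprime_two_right.mpr hd.natCast
  rw [← mul_sub, Nat.ModEq.comm, Nat.modEq_iff_dvd]
  exact ⟨hcop.dvd_of_dvd_mul_left, (·.mul_left 2)⟩

theorem count_odd_even_general (d k : ℕ) (hdo : Odd d) (hke : Even k) :
    ((Finset.range (k + 1)).filter
      (fun a : ℕ => (d : ℤ) ∣ 2 * (a : ℤ) - (k : ℤ))).card = 2 * (k / (2 * d)) + 1 := by
  obtain ⟨m, rfl⟩ := hke
  rw [← two_mul]
  calc ((Finset.range (2 * m + 1)).filter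
        (fun a : ℕ => (d : ℤ) ∣ 2 * (a : ℤ) - ((2 * m : ℕ) : ℤ))).card
      = (2 * m + 1).count (· ≡ m [MOD d]) := by
        rw [Nat.count_eq_card_filter_range]
        push_cast
        simp only [Nat.intCast_dvd_two_mul_sub_iff_modEq hdo]
    _ = 2 * (m / d) + 1 := Nat.count_modEq_two_mul_add_one hdo.pos m
    _ = 2 * (2 * m / (2 * d)) + 1 := by rw [Nat.mul_div_mul_left _ _ two_pos]

/-- For `d` odd and positive and `k` even, the number of `a ∈ [0,k]` with
`d ∣ 2a - k` is `2⌊k/(2d)⌋ + 1`. -/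
theorem count_odd_even (d k : ℕ) (hd : 1 ≤ d) (hdo : Odd d) (hke : Even k) :
    ((Finset.range (k + 1)).filter
      (fun a : ℕ => (d : ℤ) ∣ 2 * (a : ℤ) - (k : ℤ))).card = 2 * (k / (2 * d)) + 1 :=
  count_odd_even_general d k hdo hke
end
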